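/- The quadratic loss L(Θ) = ‖Y − X⊙Θ‖_F² is universally majorized by p(Θ, Θ_k, τ) = τ⁻¹‖Θ_k − τA_k − Θ‖_F² + L(Θ_k) − τ‖A_k‖_F², where A_k = X⊙(X⊙Θ_k − Y): for all Θ, L(Θ) ≤ p(Θ, Θ_k, τ), with equality L(Θ_k) = p(Θ_k, Θ_k, τ), provided 0 < τ < 1/max_{i,t} x_{it}². -/

import Mathlib

open Matrix BigOperators

/-- Squared Frobenius norm of a real matrix. -/
noncomputable def frobSq {m n : ℕ} (A : Matrix (Fin m) (Fin n) ℝ) : ℝ :=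
  ∑ i, ∑ j, A i j ^ 2

/-- Singular values of a real matrix: square roots of the eigenvalues of `Aᴴ * A`. -/
noncomputable def singVals {m n : ℕ} (A : Matrix (Fin m) (Fin n) ℝ) : Fin n → ℝ :=
  fun j => Real.sqrt ((show (Aᵀ * A).IsHermitian by
    simpa [Matrix.conjTranspose_eq_transpose_of_trivial] using
      Matrix.isHermitian_conjTranspose_mul_self A).eigenvalues j)

/-- Nuclear norm: sum of the singular values. -/
noncomputable def nuclearNorm {m n : ℕ} (A : Matrix (Fin m) (Fin n) ℝ) : ℝ :=
  ∑ j, singVals A j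

/-- Operator (spectral) norm: largest singular value. -/
noncomputable def opNorm {m n : ℕ} (A : Matrix (Fin m) (Fin n) ℝ) : ℝ :=
  ⨆ j, singVals A j

/- Writing `D = Θk − Θ` and `R = X ⊙ Θk − Y`, entrywise `Y − X ⊙ Θ = X ⊙ D − R`, and expanding both
squares shows that `p(Θ) − L(Θ) = τ⁻¹‖D‖² − ‖X ⊙ D‖²` exactly. This gap vanishes at `D = 0` and is
nonnegative as soon as every `x_{it}² ≤ τ⁻¹`. -/

section FrobSq

variable {m n : ℕ}

@[simp]
theorem frobSq_zero : frobSq (0 : Matrix (Fin m) (Fin n) ℝ) = 0 := by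
  simp [frobSq]

theorem frobSq_hadamard_le {c : ℝ} (X D : Matrix (Fin m) (Fin n) ℝ) (hX : ∀ i j, X i j ^ 2 ≤ c) :
    frobSq (X ⊙ D) ≤ c * frobSq D := by
  simp only [frobSq, Finset.mul_sum, hadamard_apply, mul_pow]
  gcongr with i _ j _
  exact hX i j

theorem majorizer_sub_loss (Y X Θk Θ : Matrix (Fin m) (Fin n) ℝ) {τ : ℝ} (hτ : τ ≠ 0) :
    τ⁻¹ * frobSq (Θk - τ • (X ⊙ (X ⊙ Θk - Y)) - Θ) + frobSq (Y - X ⊙ Θk)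
        - τ * frobSq (X ⊙ (X ⊙ Θk - Y)) - frobSq (Y - X ⊙ Θ) =
      τ⁻¹ * frobSq (Θk - Θ) - frobSq (X ⊙ (Θk - Θ)) := by
  simp only [frobSq, Finset.mul_sum, ← Finset.sum_sub_distrib, ← Finset.sum_add_distrib]
  refine Finset.sum_congr rfl fun i _ => Finset.sum_congr rfl fun j _ => ?_
  simp only [Matrix.sub_apply, Matrix.smul_apply, hadamard_apply, smul_eq_mul]
  field_simp
  ring

end FrobSq

/-- majorization. With `L(Θ) = ‖Y − X⊙Θ‖_F²` and
`A_k = X ⊙ (X ⊙ Θ_k − Y)`, for any step size `0 < τ < 1 / max_{it} x_{it}²` the loss `L` is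
universally majorized by `p(Θ, Θ_k, τ) = τ⁻¹‖Θ_k − τ A_k − Θ‖_F² + L(Θ_k) − τ‖A_k‖_F²`,
with equality at `Θ = Θ_k`. -/
theorem stmt5 {N T : ℕ} (Y X Θk : Matrix (Fin N) (Fin T) ℝ) (τ : ℝ)
    (hτ : 0 < τ) (hτX : ∀ i t, τ * X i t ^ 2 < 1) :
    (∀ Θ : Matrix (Fin N) (Fin T) ℝ,
      frobSq (Y - X ⊙ Θ) ≤
        τ⁻¹ * frobSq (Θk - τ • (X ⊙ (X ⊙ Θk - Y)) - Θ)
          + frobSq (Y - X ⊙ Θk) - τ * frobSq (X ⊙ (X ⊙ Θk - Y))) ∧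
    frobSq (Y - X ⊙ Θk) =
      τ⁻¹ * frobSq (Θk - τ • (X ⊙ (X ⊙ Θk - Y)) - Θk)
        + frobSq (Y - X ⊙ Θk) - τ * frobSq (X ⊙ (X ⊙ Θk - Y)) := by
  have hX : ∀ i t, X i t ^ 2 ≤ τ⁻¹ := fun i t =>
    mul_one τ⁻¹ ▸ (le_inv_mul_iff₀ hτ).2 (hτX i t).le
  refine ⟨fun Θ => ?_, ?_⟩
  · have hgap := majorizer_sub_loss Y X Θk Θ hτ.ne'
    have hle := frobSq_hadamard_le X (Θk - Θ) hX
    linarith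
  · have hgap := majorizer_sub_loss Y X Θk Θk hτ.ne'
    simp only [sub_self, hadamard_zero, frobSq_zero, mul_zero] at hgap
    linarith
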